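/- arXiv:2605.03306 — 3 statements merged into one kernel-verified Lean document; each statement's English description precedes it below -/
import Mathlib

section
/- A subset X of Cantor space is meager (a countable union of nowhere dense sets, in the product topology on {0,1}^ℕ) if and only if there exists a constructor δ such that for every constructor γ, the result R(δ ∘ γ) does not belong to X. (Banach–Mazur theorem for Cantor space, constructor formulation.) -/
open Filter

/-- `w` is a prefix of the infinite binary sequence `S`. -/
def SeqPrefix (w : List Bool) (S : ℕ → Bool) : Prop :=
  ∀ i, i < w.length → w.getD i false = S i

/-- A constructor: a total function with `x` a proper prefix of `δ x`. -/
def IsConstructor (δ : List Bool → List Bool) : Prop :=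
  ∀ x, x <+: δ x ∧ x ≠ δ x

/-- `S` is the result `R(δ)`: it extends every iterate `δ^[n] λ`. -/
def IsResultOf (δ : List Bool → List Bool) (S : ℕ → Bool) : Prop :=
  ∀ n, SeqPrefix (δ^[n] []) S

namespace Stmt4Aux

/-- The basic cylinder determined by the finite string `w`. -/
def Cyl (w : List Bool) : Set (ℕ → Bool) := {S | SeqPrefix w S}

lemma mem_cyl_iff {w : List Bool} {S : ℕ → Bool} : S ∈ Cyl w ↔ SeqPrefix w S := Iff.rfl

lemma seqPrefix_of_prefix {w v : List Bool} {S} (h : w <+: v) (hv : SeqPrefix v S) :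
    SeqPrefix w S := fun i hi => by
  have hiv : i < v.length := lt_of_lt_of_le hi h.length_le
  rw [List.getD_eq_getElem _ _ hi, h.getElem hi, ← List.getD_eq_getElem _ _ hiv]
  exact hv i hiv

lemma cyl_mono {w v : List Bool} (h : w <+: v) : Cyl v ⊆ Cyl w :=
  fun _ hS => seqPrefix_of_prefix h hS

lemma seqPrefix_self (v : List Bool) : SeqPrefix v (fun i => v.getD i false) :=
  fun _ _ => rfl

lemma len_lt {x y : List Bool} (h1 : x <+: y) (h2 : x ≠ y) : x.length < y.length :=
  lt_of_le_of_ne h1.length_le (fun he => h2 (h1.eq_of_length he))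

lemma prefix_of_seqPrefix {w v : List Bool} {S} (hw : SeqPrefix w S) (hv : SeqPrefix v S)
    (h : w.length ≤ v.length) : w <+: v := by
  rw [List.prefix_iff_eq_take]
  apply List.ext_getElem (by simp [Nat.min_eq_left h])
  intro i h1 h2
  have hiv : i < v.length := lt_of_lt_of_le h1 h
  rw [List.getElem_take]
  rw [← List.getD_eq_getElem w false h1, ← List.getD_eq_getElem v false hiv, hw i h1, hv i hiv]

/-- The length-`n` initial segment of `S` as a list. -/
noncomputable def pre (S : ℕ → Bool) (n : ℕ) : List Bool := List.ofFn (fun i : Fin n => S i)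

@[simp] lemma pre_length (S : ℕ → Bool) (n : ℕ) : (pre S n).length = n := by simp [pre]

lemma seqPrefix_pre (S : ℕ → Bool) (n : ℕ) : SeqPrefix (pre S n) S := by
  intro i hi
  rw [pre_length] at hi
  rw [List.getD_eq_getElem _ _ (by simpa using hi)]
  simp [pre]

lemma cyl_eq_pi (w : List Bool) :
    Cyl w = Set.pi (Set.Iio w.length) (fun i => {w.getD i false}) := by
  ext S
  simp [Cyl, SeqPrefix, Set.mem_pi, eq_comm]

lemma isOpen_cyl (w : List Bool) : IsOpen (Cyl w) := by
  rw [cyl_eq_pi]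
  exact isOpen_set_pi (Set.finite_Iio _) (fun i _ => isOpen_discrete _)

lemma isClosed_cyl (w : List Bool) : IsClosed (Cyl w) := by
  rw [cyl_eq_pi]
  exact isClosed_set_pi (fun i _ => isClosed_discrete _)

lemma cyl_nonempty (w : List Bool) : (Cyl w).Nonempty :=
  ⟨fun i => w.getD i false, seqPrefix_self w⟩

/-- Cylinders are a neighbourhood basis. -/
lemma exists_cyl_subset {U : Set (ℕ → Bool)} (hU : IsOpen U) {S : ℕ → Bool} (hS : S ∈ U) :
    ∃ n, Cyl (pre S n) ⊆ U := by
  have h1 : U ∈ nhds S := hU.mem_nhds hS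
  rw [nhds_pi, Filter.mem_pi] at h1
  obtain ⟨I, hIfin, t, ht, hsub⟩ := h1
  obtain ⟨n, hn⟩ := hIfin.bddAbove
  refine ⟨n + 1, fun T hT => hsub ?_⟩
  intro i hi
  have hlt : i < n + 1 := Nat.lt_succ_of_le (hn hi)
  have h2 : (pre S (n+1)).getD i false = T i := hT i (by simpa using hlt)
  have h3 : (pre S (n+1)).getD i false = S i := seqPrefix_pre S (n+1) i (by simpa using hlt)
  rw [← h2, h3]
  exact mem_of_mem_nhds (ht i)

/-- Any string can be extended into the complement of a closed set with empty interior. -/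
lemma avoid {F : Set (ℕ → Bool)} (hcl : IsClosed F) (hint : interior F = ∅) (x : List Bool) :
    ∃ y, x <+: y ∧ Cyl y ⊆ Fᶜ := by
  have hx : ¬ Cyl x ⊆ F := by
    intro h
    have h2 : Cyl x ⊆ interior F := (isOpen_cyl x).subset_interior_iff.mpr h
    rw [hint, Set.subset_empty_iff] at h2
    exact (cyl_nonempty x).ne_empty h2
  obtain ⟨S, hSx, hSF⟩ := Set.not_subset.mp hx
  obtain ⟨n, hn⟩ := exists_cyl_subset hcl.isOpen_compl hSF
  refine ⟨pre S (max n x.length), ?_, ?_⟩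
  · exact prefix_of_seqPrefix (mem_cyl_iff.mp hSx) (seqPrefix_pre S _)
      (by rw [pre_length]; exact le_max_right _ _)
  · refine (cyl_mono (prefix_of_seqPrefix (seqPrefix_pre S n) (seqPrefix_pre S _) ?_)).trans hn
    rw [pre_length, pre_length]; exact le_max_left _ _

lemma avoidMany {F : ℕ → Set (ℕ → Bool)} (hcl : ∀ n, IsClosed (F n))
    (hint : ∀ n, interior (F n) = ∅) (x : List Bool) (N : ℕ) :
    ∃ y, x <+: y ∧ ∀ i ≤ N, Cyl y ⊆ (F i)ᶜ := by
  induction N with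
  | zero =>
    obtain ⟨y, h1, h2⟩ := avoid (hcl 0) (hint 0) x
    exact ⟨y, h1, fun i hi => by simpa [Nat.le_zero.mp hi] using h2⟩
  | succ n ih =>
    obtain ⟨y, h1, h2⟩ := ih
    obtain ⟨z, hz1, hz2⟩ := avoid (hcl (n+1)) (hint (n+1)) y
    refine ⟨z, h1.trans hz1, fun i hi => ?_⟩
    rcases Nat.lt_succ_iff_lt_or_eq.mp (Nat.lt_succ_of_le hi) with h | h
    · exact (cyl_mono hz1).trans (h2 i (Nat.lt_succ_iff.mp h))
    · rw [h]; exact hz2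

/-- The winning strategy for player II given a covering of X by closed sets with
empty interior. -/
noncomputable def delta {F : ℕ → Set (ℕ → Bool)} (hcl : ∀ n, IsClosed (F n))
    (hint : ∀ n, interior (F n) = ∅) : List Bool → List Bool :=
  fun x => (avoidMany hcl hint x x.length).choose ++ [false]

lemma delta_spec {F : ℕ → Set (ℕ → Bool)} (hcl : ∀ n, IsClosed (F n))
    (hint : ∀ n, interior (F n) = ∅) (x : List Bool) :
    x <+: delta hcl hint x ∧ ∀ i ≤ x.length, Cyl (delta hcl hint x) ⊆ (F i)ᶜ := by
  obtain ⟨h1, h2⟩ := (avoidMany hcl hint x x.length).choose_spec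
  refine ⟨h1.trans (List.prefix_append _ _), fun i hi => ?_⟩
  exact (cyl_mono (List.prefix_append _ _)).trans (h2 i hi)

lemma delta_constructor {F : ℕ → Set (ℕ → Bool)} (hcl : ∀ n, IsClosed (F n))
    (hint : ∀ n, interior (F n) = ∅) : IsConstructor (delta hcl hint) := by
  intro x
  obtain ⟨h1, _⟩ := delta_spec hcl hint x
  refine ⟨h1, fun h => ?_⟩
  have h2 := (avoidMany hcl hint x x.length).choose_spec.1.length_le
  have h3 : (delta hcl hint x).length = (avoidMany hcl hint x x.length).choose.length + 1 := by
    simp [delta]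
  have h4 := congrArg List.length h
  omega

/-- The nowhere dense "trap" sets witnessing meagreness given a winning strategy. -/
def Trap (δ : List Bool → List Bool) (p : List Bool) : Set (ℕ → Bool) :=
  {S | SeqPrefix p S ∧ ∀ q, p <+: q → p ≠ q → ¬ SeqPrefix (δ q) S}

lemma isClosed_trap (δ : List Bool → List Bool) (p : List Bool) : IsClosed (Trap δ p) := by
  have : Trap δ p = Cyl p ∩ ⋂ (q : List Bool) (_ : p <+: q) (_ : p ≠ q), (Cyl (δ q))ᶜ := by
    ext S
    simp only [Trap, Set.mem_inter_iff, Set.mem_iInter, Set.mem_compl_iff, mem_cyl_iff,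
      Set.mem_setOf_eq]
  rw [this]
  exact (isClosed_cyl p).inter (isClosed_iInter fun q => isClosed_iInter fun _ =>
    isClosed_iInter fun _ => (isOpen_cyl (δ q)).isClosed_compl)

lemma interior_trap {δ : List Bool → List Bool} (hδ : IsConstructor δ) (p : List Bool) :
    interior (Trap δ p) = ∅ := by
  rw [Set.eq_empty_iff_forall_notMem]
  intro S hS
  obtain ⟨n, hn⟩ := exists_cyl_subset isOpen_interior hS
  have hsub : Cyl (pre S n) ⊆ Trap δ p := hn.trans interior_subset
  have hSE : S ∈ Trap δ p := interior_subset hS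
  have hp : SeqPrefix p S := hSE.1
  obtain ⟨q, hpq, hpne, hwq⟩ : ∃ q, p <+: q ∧ p ≠ q ∧ pre S n <+: q := by
    by_cases h : n ≤ p.length
    · refine ⟨p ++ [false], List.prefix_append _ _, ?_, ?_⟩
      · intro he; have := congrArg List.length he; simp at this
      · exact (prefix_of_seqPrefix (seqPrefix_pre S n) hp (by rw [pre_length]; exact h)).trans
          (List.prefix_append _ _)
    · refine ⟨pre S n ++ [false], ?_, ?_, List.prefix_append _ _⟩
      · exact (prefix_of_seqPrefix hp (seqPrefix_pre S n) (by rw [pre_length]; omega)).trans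
          (List.prefix_append _ _)
      · intro he; have := congrArg List.length he; simp [pre_length] at this; omega
  set T : ℕ → Bool := fun i => (δ q).getD i false with hT
  have hTq : SeqPrefix (δ q) T := seqPrefix_self _
  have hTw : T ∈ Cyl (pre S n) := seqPrefix_of_prefix (hwq.trans (hδ q).1) hTq
  exact (hsub hTw).2 q hpq hpne hTq

lemma trap_nowhereDense {δ : List Bool → List Bool} (hδ : IsConstructor δ) (p : List Bool) :
    IsNowhereDense (Trap δ p) :=
  ((isClosed_trap δ p).isNowhereDense_iff).mpr (interior_trap hδ p)

lemma cover {X : Set (ℕ → Bool)} {δ : List Bool → List Bool}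
    (hwin : ∀ γ : List Bool → List Bool, IsConstructor γ →
          ∀ S : ℕ → Bool, IsResultOf (δ ∘ γ) S → S ∉ X) :
    X ⊆ ⋃₀ Set.range (Trap δ) := by
  intro S hSX
  by_contra hS
  have hnot : ∀ p, S ∉ Trap δ p := fun p hp => hS ⟨Trap δ p, Set.mem_range_self p, hp⟩
  have key : ∀ p, SeqPrefix p S → ∃ q, p <+: q ∧ p ≠ q ∧ SeqPrefix (δ q) S := by
    intro p hp
    by_contra h
    push_neg at h
    exact hnot p ⟨hp, fun q h1 h2 h3 => (h q h1 h2) h3⟩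
  classical
  set Q : List Bool → List Bool := fun p =>
    if h : ∃ q, p <+: q ∧ p ≠ q ∧ SeqPrefix (δ q) S then h.choose else p ++ [false] with hQ
  have hQc : IsConstructor Q := by
    intro x
    by_cases h : ∃ q, x <+: q ∧ x ≠ q ∧ SeqPrefix (δ q) S
    · simp only [hQ, dif_pos h]
      exact ⟨h.choose_spec.1, h.choose_spec.2.1⟩
    · simp only [hQ, dif_neg h]
      exact ⟨List.prefix_append _ _, fun he => by
        have := congrArg List.length he; simp at this⟩
  have hstep : ∀ p, SeqPrefix p S → SeqPrefix (δ (Q p)) S := by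
    intro p hp
    have h : ∃ q, p <+: q ∧ p ≠ q ∧ SeqPrefix (δ q) S := key p hp
    simp only [hQ, dif_pos h]
    exact h.choose_spec.2.2
  have hres : IsResultOf (δ ∘ Q) S := by
    intro n
    induction n with
    | zero => intro i hi; simp at hi
    | succ m ih =>
      rw [Function.iterate_succ_apply']
      exact hstep _ ih
  exact hwin Q hQc S hres hSX

end Stmt4Aux

open Stmt4Aux in
/-- Banach–Mazur, constructor formulation: `X ⊆ {0,1}^ℕ` is meager
iff player II has a winning constructor strategy against `X`. -/
theorem stmt4 (X : Set (ℕ → Bool)) :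
    IsMeagre X ↔
      ∃ δ : List Bool → List Bool, IsConstructor δ ∧
        ∀ γ : List Bool → List Bool, IsConstructor γ →
          ∀ S : ℕ → Bool, IsResultOf (δ ∘ γ) S → S ∉ X := by
  constructor
  · intro h
    rw [isMeagre_iff_countable_union_isNowhereDense] at h
    obtain ⟨𝒮, hND, hcnt, hsub⟩ := h
    obtain ⟨f, hf⟩ := Set.Countable.exists_eq_range (hcnt.insert ∅) (Set.insert_nonempty _ _)
    set F : ℕ → Set (ℕ → Bool) := fun n => closure (f n) with hF
    have hcl : ∀ n, IsClosed (F n) := fun n => isClosed_closure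
    have hint : ∀ n, interior (F n) = ∅ := by
      intro n
      have hmem : f n ∈ insert ∅ 𝒮 := hf ▸ Set.mem_range_self n
      rcases hmem with h | h
    -- note: mem insert
      · simp [hF, h]
      · exact hND _ h
    have hXsub : X ⊆ ⋃ n, F n := by
      intro S hSX
      obtain ⟨t, ht, hSt⟩ := hsub hSX
      have : t ∈ Set.range f := by rw [← hf]; exact Set.mem_insert_of_mem _ ht
      obtain ⟨n, rfl⟩ := this
      exact Set.mem_iUnion.mpr ⟨n, subset_closure hSt⟩
    refine ⟨delta hcl hint, delta_constructor hcl hint, ?_⟩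
    intro γ hγ S hres
    -- lengths of iterates grow
    set p : ℕ → List Bool := fun n => (delta hcl hint ∘ γ)^[n] [] with hp
    have hlen : ∀ n, n ≤ (p n).length := by
      intro n
      induction n with
      | zero => exact Nat.zero_le _
      | succ m ih =>
        have h1 : (p m) <+: γ (p m) := (hγ (p m)).1
        have h2 := len_lt ((delta_constructor hcl hint (γ (p m))).1)
          ((delta_constructor hcl hint (γ (p m))).2)
        have h3 : p (m+1) = delta hcl hint (γ (p m)) := by
          simp only [hp, Function.iterate_succ_apply']; rfl
        have h4 := h1.length_le
        rw [h3]
        omega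
    have hSF : ∀ n, S ∉ F n := by
      intro n hSFn
      have h3 : p (n+1) = delta hcl hint (γ (p n)) := by
        simp only [hp, Function.iterate_succ_apply']; rfl
      have hmem : S ∈ Cyl (p (n+1)) := hres (n+1)
      rw [h3] at hmem
      have hle : n ≤ (γ (p n)).length := le_trans (hlen n) (hγ (p n)).1.length_le
      exact (delta_spec hcl hint (γ (p n))).2 n hle hmem hSFn
    intro hSX
    obtain ⟨n, hn⟩ := Set.mem_iUnion.mp (hXsub hSX)
    exact hSF n hn
  · rintro ⟨δ, hδ, hwin⟩
    rw [isMeagre_iff_countable_union_isNowhereDense]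
    exact ⟨Set.range (Trap δ), fun t ⟨p, hp⟩ => hp ▸ trap_nowhereDense hδ p,
      Set.countable_range _, cover hwin⟩
end

section
/- If X and Y are subsets of Cantor space and player II has winning strategies δ_X and δ_Y against X and Y respectively in the Banach–Mazur game, then player II has a winning strategy against X ∪ Y, namely the composition δ_Y ∘ δ_X. -/
open Filter

lemma constructor_length_lt {δ : List Bool → List Bool} (h : IsConstructor δ)
    (x : List Bool) : x.length < (δ x).length := by
  obtain ⟨hp, hne⟩ := h x
  exact lt_of_le_of_ne hp.length_le (fun hl => hne (List.IsPrefix.eq_of_length hp hl))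

lemma constructor_comp {f g : List Bool → List Bool} (hf : IsConstructor f)
    (hg : IsConstructor g) : IsConstructor (f ∘ g) := by
  intro x
  have h1 : x <+: g x := (hg x).1
  have h2 : g x <+: f (g x) := (hf (g x)).1
  refine ⟨h1.trans h2, fun hx => ?_⟩
  have : x.length < (f (g x)).length :=
    lt_of_lt_of_le (constructor_length_lt hg x) h2.length_le
  rw [Function.comp_apply] at hx
  rw [← hx] at this; exact lt_irrefl _ this

lemma seqPrefix_of_prefix {w v : List Bool} {S : ℕ → Bool}
    (hwv : w <+: v) (hv : SeqPrefix v S) : SeqPrefix w S := by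
  intro i hi
  have hiv : i < v.length := lt_of_lt_of_le hi hwv.length_le
  rw [List.getD_eq_getElem _ _ hi, ← hv i hiv, List.getD_eq_getElem _ _ hiv]
  exact hwv.getElem hi

/-- if `δX` wins against `X` and `δY` wins against `Y`, then
`δY ∘ δX` wins against `X ∪ Y`. -/
theorem stmt11 (X Y : Set (ℕ → Bool)) (δX δY : List Bool → List Bool)
    (hδX : IsConstructor δX) (hδY : IsConstructor δY)
    (hX : ∀ γ : List Bool → List Bool, IsConstructor γ →
      ∀ S : ℕ → Bool, IsResultOf (δX ∘ γ) S → S ∉ X)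
    (hY : ∀ γ : List Bool → List Bool, IsConstructor γ →
      ∀ S : ℕ → Bool, IsResultOf (δY ∘ γ) S → S ∉ Y) :
    ∀ γ : List Bool → List Bool, IsConstructor γ →
      ∀ S : ℕ → Bool, IsResultOf ((δY ∘ δX) ∘ γ) S → S ∉ X ∪ Y := by
  intro γ hγ S hS
  set f := (δY ∘ δX) ∘ γ with hf
  -- Y part: (δY ∘ δX) ∘ γ = δY ∘ (δX ∘ γ)
  have hnotY : S ∉ Y := by
    refine hY (δX ∘ γ) (constructor_comp hδX hγ) S ?_
    intro n
    have : (δY ∘ (δX ∘ γ)) = f := rfl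
    rw [this]
    exact hS n
  -- X part
  set γ' : List Bool → List Bool := fun x => if x = [] then γ [] else γ (δY x) with hγ'
  have hγ'c : IsConstructor γ' := by
    intro x
    by_cases hx : x = []
    · subst hx
      simp only [hγ', if_pos rfl]
      exact hγ []
    · simp only [hγ', if_neg hx]
      have h1 : x <+: δY x := (hδY x).1
      have h2 : δY x <+: γ (δY x) := (hγ (δY x)).1
      refine ⟨h1.trans h2, fun he => ?_⟩
      have : x.length < (γ (δY x)).length :=
        lt_of_lt_of_le (constructor_length_lt hδY x) h2.length_le
      rw [← he] at this; exact lt_irrefl _ this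
  -- key: iterates of δX ∘ γ' relate to iterates of f
  have key : ∀ m, (δX ∘ γ')^[m + 1] [] = δX (γ (f^[m] [])) := by
    intro m
    induction m with
    | zero => simp [hγ']
    | succ m ih =>
      rw [Function.iterate_succ_apply' (δX ∘ γ') (m + 1), ih]
      have hne : δX (γ (f^[m] [])) ≠ [] := by
        intro h
        have := constructor_length_lt (constructor_comp hδX hγ) (f^[m] [])
        simp only [Function.comp_apply] at this
        rw [h] at this; simp at this
      have : γ' (δX (γ (f^[m] []))) = γ (f^[m + 1] []) := by
        simp only [hγ', if_neg hne]
        rw [Function.iterate_succ_apply' f m]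
        rfl
      simp only [Function.comp_apply, this]
  have hnotX : S ∉ X := by
    refine hX γ' hγ'c S ?_
    intro n
    cases n with
    | zero => intro i hi; simp at hi
    | succ m =>
      rw [key m]
      refine seqPrefix_of_prefix ?_ (hS (m + 1))
      rw [Function.iterate_succ_apply' f m]
      exact (hδY (δX (γ (f^[m] [])))).1
  intro h
  cases h with
  | inl h => exact hnotX h
  | inr h => exact hnotY h
end

section
/- SIZE(2^n/n) is meager in Cantor space: assuming for every sufficiently large n there exists a Boolean function on n variables with circuit complexity greater than 2^n/n, the class SIZE(2^n/n), viewed as a subset of Cantor space via characteristic sequences, is a meager subset of Cantor space (in the product topology). -/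
/-!
Writing the truth table of a hard function into the block of positions that encode length `n`
moves a point of Cantor space only at positions `≥ 2^n - 1`. Padding any `S` in this way at
larger and larger lengths gives sequences converging to `S` that are hard at some length `≥ N`,
so for every `N` the open set of sequences that are hard at some length `≥ N` is dense.
`SIZE(s)` lies in the countable union over `N` of the closed complements of these dense open
sets, hence is meagre.
-/

open Filter

/-- Boolean circuits over the basis of all binary gates, with inputs and constants. -/
inductive Circuit (n : ℕ) where
  | input : Fin n → Circuit n
  | const : Bool → Circuit n
  | gate : (Bool → Bool → Bool) → Circuit n → Circuit n → Circuit n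

/-- Number of gates of a circuit. -/
def Circuit.size {n : ℕ} : Circuit n → ℕ
  | .input _ => 0
  | .const _ => 0
  | .gate _ a b => a.size + b.size + 1

/-- Evaluation of a circuit on an input assignment. -/
def Circuit.eval {n : ℕ} (x : Fin n → Bool) : Circuit n → Bool
  | .input i => x i
  | .const b => b
  | .gate g a b => g (a.eval x) (b.eval x)

/-- Circuit complexity: the minimum number of gates needed to compute `f`. -/
noncomputable def circuitComplexity {n : ℕ} (f : (Fin n → Bool) → Bool) : ℕ :=
  sInf {s | ∃ C : Circuit n, C.size ≤ s ∧ ∀ x, C.eval x = f x}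

/-- Index of a length-`n` string in lexicographic order (most significant bit first). -/
def strIndex {n : ℕ} (x : Fin n → Bool) : ℕ :=
  ∑ i : Fin n, cond (x i) (2 ^ (n - 1 - i.val)) 0

/-- The Boolean function at length `n` of the language with characteristic sequence `S`:
determined by the bits at positions `2^n - 1, …, 2^(n+1) - 2`. -/
def seqFnAt (S : ℕ → Bool) (n : ℕ) : (Fin n → Bool) → Bool :=
  fun x => S (2 ^ n - 1 + strIndex x)

/-- The Boolean function on `n` variables whose truth table is the string `w`. -/
def ttFn (n : ℕ) (w : List Bool) : (Fin n → Bool) → Bool :=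
  fun x => w.getD (strIndex x) false

/-- `SIZE(s(n))` for Cantor-space points: eventually, the function at length `n`
has a circuit of size at most `s n`. -/
noncomputable def SIZEc (s : ℕ → ℕ) : Set (ℕ → Bool) :=
  {S | ∀ᶠ n in Filter.atTop, circuitComplexity (seqFnAt S n) ≤ s n}

open Topology

theorem isMeagre_setOf_eventually_notMem {X : Type*} [TopologicalSpace X] {H : ℕ → Set X}
    (hopen : ∀ n, IsOpen (H n)) (hdense : ∀ N, Dense (⋃ n ≥ N, H n)) :
    IsMeagre {x | ∀ᶠ n in atTop, x ∉ H n} := by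
  have hunion : {x | ∀ᶠ n in atTop, x ∉ H n} = ⋃ N, (⋃ n ≥ N, H n)ᶜ := by
    ext x
    simp [eventually_atTop]
  rw [hunion]
  refine isMeagre_iUnion fun N => ?_
  rw [IsMeagre, compl_compl]
  exact residual_of_dense_open (isOpen_biUnion fun n _ => hopen n) (hdense N)

theorem strIndex_eq_sum_two_pow {n : ℕ} (x : Fin n → Bool) :
    strIndex x =
      ∑ k ∈ (Finset.univ.filter (x · = true)).image (fun i => (Fin.rev i : ℕ)), 2 ^ k := by
  rw [Finset.sum_image fun i _ j _ h => Fin.rev_injective (Fin.ext h), Finset.sum_filter]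
  refine Finset.sum_congr rfl fun i _ => ?_
  rw [Fin.val_rev, Nat.sub_sub, Nat.add_comm 1]
  cases x i <;> rfl

theorem strIndex_injective {n : ℕ} : Function.Injective (strIndex (n := n)) := by
  intro x y h
  rw [strIndex_eq_sum_two_pow, strIndex_eq_sum_two_pow] at h
  have hsupp := Finset.image_injective (fun i j h => Fin.rev_injective (Fin.ext h))
    (Finset.geomSum_injective le_rfl h)
  funext i
  have hi := Finset.ext_iff.1 hsupp i
  simp only [Finset.mem_filter, Finset.mem_univ, true_and] at hi
  exact Bool.eq_iff_iff.2 hi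

/-- Position of a string of length `n` in the enumeration `λ, 0, 1, 00, 01, …` of `{0,1}*`. -/
def strPos {n : ℕ} (x : Fin n → Bool) : ℕ :=
  2 ^ n - 1 + strIndex x

theorem strPos_injective {n : ℕ} : Function.Injective (strPos (n := n)) :=
  (add_right_injective _).comp strIndex_injective

theorem continuous_seqFnAt (n : ℕ) : Continuous fun S : ℕ → Bool => seqFnAt S n :=
  continuous_pi fun _ => continuous_apply _

theorem seqFnAt_extend_strPos {n : ℕ} (g : (Fin n → Bool) → Bool) (S : ℕ → Bool) :
    seqFnAt (Function.extend strPos g S) n = g :=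
  funext fun x => strPos_injective.extend_apply g S x

theorem extend_strPos_apply_of_lt {n i : ℕ} (hi : i < 2 ^ n - 1) (g : (Fin n → Bool) → Bool)
    (S : ℕ → Bool) : Function.extend strPos g S i = S i :=
  Function.extend_apply' _ _ _ <| by
    rintro ⟨x, rfl⟩
    exact absurd hi (not_lt.2 (Nat.le_add_right _ _))

theorem tendsto_extend_strPos (g : ∀ n, (Fin n → Bool) → Bool) (S : ℕ → Bool) :
    Tendsto (fun n => Function.extend strPos (g n) S) atTop (𝓝 S) := by
  refine tendsto_pi_nhds.2 fun i => tendsto_const_nhds.congr' ?_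
  filter_upwards [eventually_gt_atTop i] with n hn
  have := @Nat.lt_two_pow_self n
  exact (extend_strPos_apply_of_lt (by omega) (g n) S).symm

theorem isMeagre_SIZEc {s : ℕ → ℕ}
    (hhard : ∀ᶠ n in atTop, ∃ g : (Fin n → Bool) → Bool, s n < circuitComplexity g) :
    IsMeagre (SIZEc s) := by
  set hardAt : ℕ → Set (ℕ → Bool) := fun n => {S | s n < circuitComplexity (seqFnAt S n)}
  have hSIZE : SIZEc s = {S | ∀ᶠ n in atTop, S ∉ hardAt n} := by
    ext S
    simp [SIZEc, hardAt]
  have hopen (n : ℕ) : IsOpen (hardAt n) :=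
    (isOpen_discrete {f | s n < circuitComplexity f}).preimage (continuous_seqFnAt n)
  obtain ⟨g, hg⟩ := Filter.skolem.1 hhard
  have hdense (N : ℕ) : Dense (⋃ n ≥ N, hardAt n) := fun S => by
    refine mem_closure_of_tendsto (tendsto_extend_strPos g S) ?_
    filter_upwards [hg, eventually_ge_atTop N] with n hn hNn
    exact Set.mem_biUnion hNn (by simpa [hardAt, seqFnAt_extend_strPos] using hn)
  rw [hSIZE]
  exact isMeagre_setOf_eventually_notMem hopen hdense

/-- assuming hard functions exist at all sufficiently large lengths,
`SIZE(2^n/n)` is a meager subset of Cantor space. -/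
theorem stmt18
    (hhard : ∀ᶠ n in Filter.atTop,
      ∃ g : (Fin n → Bool) → Bool, circuitComplexity g > 2 ^ n / n) :
    IsMeagre (SIZEc (fun n => 2 ^ n / n)) :=
  isMeagre_SIZEc hhard
end
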